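/- Assume that neither 2β + 2ζ nor 2α + β + 2ζ is an integer. For 0 ≤ n ≤ N define the vector e_n ∈ ℝ^{N+1} with components e_n(ℓ) = [(−N)_n (N−2α−β−2ζ)_n / (n−2β−2ζ−1)_n] · (−1)^ℓ (−n)_ℓ (n−2β−2ζ−1)_ℓ / (ℓ! (−N)_ℓ (N−2α−β−2ζ)_ℓ), and for 0 ≤ m ≤ N define e*_m ∈ ℝ^{N+1} with components e*_m(ℓ) = [(−N)_{N−m} (m+N−2α−β−2ζ)_{N−m} / (2β+2ζ−N−m+1)_{N−m}] · (m−N)_{N−ℓ} (2β+2ζ−N−m+1)_{N−ℓ} / ((N−ℓ)! (−N)_{N−ℓ} (2α+β+2ζ−2N+1)_{N−ℓ}). Then for all 0 ≤ m, n ≤ N one has Σ_{ℓ=0}^{N} e*_m(ℓ) e_n(ℓ) = δ_{m,n}. -/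

import Mathlib

/-- The Pochhammer symbol `(a)_k = a(a+1)⋯(a+k−1)`. -/
noncomputable def poch (a : ℝ) (k : ℕ) : ℝ := ∏ i ∈ Finset.range k, (a + i)

lemma poch_zero (a : ℝ) : poch a 0 = 1 := by simp [poch]
lemma poch_one (a : ℝ) : poch a 1 = a := by simp [poch]
lemma poch_succ (a : ℝ) (k : ℕ) : poch a (k+1) = poch a k * (a + k) := by
  simp [poch, Finset.prod_range_succ]
lemma poch_add (a : ℝ) (j k : ℕ) : poch a (j + k) = poch a j * poch (a + j) k := by
  simp only [poch, Finset.prod_range_add]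
  congr 1
  refine Finset.prod_congr rfl fun i _ => ?_
  push_cast; ring
lemma poch_succ' (a : ℝ) (k : ℕ) : poch a (k+1) = a * poch (a+1) k := by
  have := poch_add a 1 k
  rw [add_comm 1 k] at this
  simpa [poch_one] using this

lemma poch_neg_nat_eq_zero {a k : ℕ} (h : a < k) : poch (-(a:ℝ)) k = 0 := by
  apply Finset.prod_eq_zero (Finset.mem_range.mpr h)
  simp

lemma poch_neg_nat {a : ℕ} : ∀ {b : ℕ}, b ≤ a →
    poch (-(a:ℝ)) b = (-1:ℝ)^b * (Nat.factorial a) / (Nat.factorial (a-b)) := by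
  intro b
  induction b with
  | zero =>
    intro _
    have : ((Nat.factorial a : ℝ)) ≠ 0 := by exact_mod_cast Nat.factorial_ne_zero _
    simp [poch_zero, div_self this]
  | succ b ih =>
    intro h
    obtain ⟨x, rfl⟩ : ∃ x, a = x + (b+1) := ⟨a - (b+1), by omega⟩
    have hb : b ≤ x + (b+1) := by omega
    rw [poch_succ, ih hb]
    have h1 : x + (b+1) - b = x + 1 := by omega
    have h2 : x + (b+1) - (b+1) = x := by omega
    have h3 : (-((x + (b+1) : ℕ):ℝ) + b) = -((x:ℝ) + 1) := by push_cast; ring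
    rw [h1, h2, h3, Nat.factorial_succ]
    have hf1 : ((Nat.factorial x : ℝ)) ≠ 0 := by exact_mod_cast Nat.factorial_ne_zero _
    have hf2 : ((x:ℝ) + 1) ≠ 0 := by positivity
    push_cast
    field_simp
    ring

lemma prod_range_neg (f : ℕ → ℝ) (k : ℕ) :
    ∏ x ∈ Finset.range k, (-(f x)) = (-1:ℝ)^k * ∏ x ∈ Finset.range k, f x := by
  induction k with
  | zero => simp
  | succ k ih => rw [Finset.prod_range_succ, Finset.prod_range_succ, ih, pow_succ]; ring

lemma poch_reflect (a : ℝ) (k : ℕ) : poch a k = (-1:ℝ)^k * poch (1 - a - k) k := by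
  have key : poch (1 - a - k) k = (-1:ℝ)^k * poch a k := by
    unfold poch
    rw [← Finset.prod_range_reflect]
    have h : ∀ j ∈ Finset.range k, (1 - a - (k:ℝ) + ((k - 1 - j : ℕ):ℝ)) = -(a + j) := by
      intro j hj
      have hj' : j < k := Finset.mem_range.mp hj
      have hc : ((k - 1 - j : ℕ):ℝ) = (k:ℝ) - 1 - j := by
        have h2 : k - 1 - j = k - (1 + j) := by omega
        rw [h2, Nat.cast_sub (by omega)]
        push_cast; ring
      rw [hc]; ring
    rw [Finset.prod_congr rfl h, prod_range_neg]
  rw [key, ← mul_assoc, ← mul_pow]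
  norm_num

lemma poch_ne_zero {a : ℝ} (h : ∀ i : ℕ, a + i ≠ 0) (k : ℕ) : poch a k ≠ 0 := by
  unfold poch
  rw [Finset.prod_ne_zero_iff]
  exact fun i _ => h i

lemma poch_nonint_ne_zero {x : ℝ} (h : ∀ z : ℤ, x ≠ z) (b : ℝ)
    (hb : (∃ r : ℤ, b = x + r) ∨ (∃ r : ℤ, b = -x + r)) (k : ℕ) : poch b k ≠ 0 := by
  apply poch_ne_zero
  intro i
  rcases hb with ⟨r, rfl⟩ | ⟨r, rfl⟩
  · intro hz
    apply h (-(r + i))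
    push_cast
    linarith
  · intro hz
    apply h (r + i)
    push_cast
    linarith

lemma poch_ratio (x : ℝ) (hx : ∀ t : ℕ, poch x t ≠ 0) (p q r : ℕ) (hpq : p + q = r) :
    poch (x + p) q = poch x r / poch x p := by
  rw [eq_div_iff (hx p), ← hpq, poch_add]
  ring

lemma alt_sum_poch : ∀ K : ℕ, ∀ r : ℕ, r < K → ∀ a : ℝ,
    ∑ u ∈ Finset.range (K+1), (-1:ℝ)^u * (K.choose u : ℝ) * poch (a + u) r = 0 := by
  intro K
  induction K with
  | zero => intro r hr; omega
  | succ K ih =>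
    intro r hr a
    cases r with
    | zero =>
      simp only [poch_zero, mul_one]
      have hI := Int.alternating_sum_range_choose (n := K+1)
      rw [if_neg (Nat.succ_ne_zero K)] at hI
      calc ∑ u ∈ Finset.range (K+1+1), (-1:ℝ)^u * ((K+1).choose u : ℝ)
          = ((∑ u ∈ Finset.range (K+1+1), (-1:ℤ)^u * ((K+1).choose u) : ℤ) : ℝ) := by
            push_cast; rfl
        _ = 0 := by rw [hI]; norm_num
    | succ r' =>
      have hr' : r' < K := by omega
      set p : ℕ → ℝ := fun u => poch (a + u) (r'+1) with hp
      have hstep : ∀ v : ℕ, p v - p (v+1) = -((r':ℝ)+1) * poch ((a+1) + v) r' := by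
        intro v
        have e1 : (a + ((v+1:ℕ):ℝ)) = (a + (v:ℕ)) + 1 := by push_cast; ring
        have e2 : (a + (v:ℕ)) + 1 = (a+1) + (v:ℕ) := by ring
        simp only [hp]
        rw [e1, poch_succ' (a + (v:ℕ)) r', poch_succ ((a + (v:ℕ)) + 1) r', e2]
        ring
      have htop : ∑ u ∈ Finset.range (K+2), (-1:ℝ)^u * (K.choose u:ℝ) * p u
          = ∑ u ∈ Finset.range (K+1), (-1:ℝ)^u * (K.choose u:ℝ) * p u := by
        rw [Finset.sum_range_succ]
        simp [Nat.choose_succ_self]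
      have split : ∑ u ∈ Finset.range (K+2), (-1:ℝ)^u * ((K+1).choose u : ℝ) * p u
          = (∑ v ∈ Finset.range (K+1), (-1:ℝ)^(v+1) * (K.choose v:ℝ) * p (v+1))
            + ∑ u ∈ Finset.range (K+1), (-1:ℝ)^u * (K.choose u:ℝ) * p u := by
        rw [Finset.sum_range_succ' (fun u => (-1:ℝ)^u * ((K+1).choose u : ℝ) * p u) (K+1)]
        rw [← htop,
          Finset.sum_range_succ' (fun u => (-1:ℝ)^u * ((K).choose u : ℝ) * p u) (K+1)]
        have hterm : ∀ v ∈ Finset.range (K+1),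
            (-1:ℝ)^(v+1) * (((K+1).choose (v+1) : ℕ) : ℝ) * p (v+1)
            = (-1:ℝ)^(v+1) * (K.choose v : ℝ) * p (v+1)
              + (-1:ℝ)^(v+1) * (K.choose (v+1) : ℝ) * p (v+1) := by
          intro v _
          rw [Nat.choose_succ_succ]
          push_cast
          ring
        rw [Finset.sum_congr rfl hterm, Finset.sum_add_distrib]
        simp only [Nat.choose_zero_right, pow_zero, Nat.cast_one, one_mul]
        ring
      show ∑ u ∈ Finset.range (K+2), (-1:ℝ)^u * ((K+1).choose u : ℝ) * p u = 0
      rw [split, ← Finset.sum_add_distrib]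
      have hcomb : ∀ v ∈ Finset.range (K+1),
          (-1:ℝ)^(v+1) * (K.choose v:ℝ) * p (v+1) + (-1:ℝ)^v * (K.choose v:ℝ) * p v
          = (-((r':ℝ)+1)) * ((-1:ℝ)^v * (K.choose v:ℝ) * poch ((a+1) + v) r') := by
        intro v _
        rw [pow_succ]
        linear_combination ((-1:ℝ)^v * (K.choose v:ℝ)) * hstep v
      rw [Finset.sum_congr rfl hcomb, ← Finset.mul_sum, ih r' hr' (a+1), mul_zero]

set_option maxHeartbeats 4000000 in
lemma key_term (N m n ℓ : ℕ) (c d : ℝ) (hc : ∀ z : ℤ, c ≠ (z:ℝ)) (hd : ∀ z : ℤ, d ≠ (z:ℝ))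
    (hmℓ : m ≤ ℓ) (hℓn : ℓ ≤ n) (hnN : n ≤ N) (hmn : m < n) :
    (poch ((m:ℝ) - (N:ℝ)) (N-ℓ) * poch (c - (N:ℝ) - (m:ℝ) + 1) (N-ℓ)
        / ((Nat.factorial (N-ℓ) : ℝ) * poch (-(N:ℝ)) (N-ℓ) * poch (d - 2*(N:ℝ) + 1) (N-ℓ)))
    * ((-1:ℝ)^ℓ * poch (-(n:ℝ)) ℓ * poch ((n:ℝ) - c - 1) ℓ
        / ((Nat.factorial ℓ : ℝ) * poch (-(N:ℝ)) ℓ * poch ((N:ℝ) - d) ℓ))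
    = (((Nat.factorial (N-m):ℝ) * (Nat.factorial n) * poch (-d) N * poch (-c) (N+m))
        / (((Nat.factorial N:ℝ))^2 * poch (-d) (2*N) * poch (-c) (n-1) * (Nat.factorial (n-m))))
      * ((-1:ℝ)^ℓ * ((n-m).choose (ℓ-m) : ℝ) * poch ((m:ℝ) + (ℓ:ℝ) - c) (n-m-1)) := by
  have hℓN : ℓ ≤ N := le_trans hℓn hnN
  have hmN : m ≤ N := le_trans (le_of_lt hmn) hnN
  have hn1 : 1 ≤ n := by omega
  have hΦ : ∀ t : ℕ, poch (-c) t ≠ 0 :=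
    fun t => poch_nonint_ne_zero hc (-c) (Or.inr ⟨0, by norm_num⟩) t
  have hΨ : ∀ t : ℕ, poch (-d) t ≠ 0 :=
    fun t => poch_nonint_ne_zero hd (-d) (Or.inr ⟨0, by norm_num⟩) t
  have r1 : poch ((m:ℝ) - (N:ℝ)) (N-ℓ)
      = (-1:ℝ)^(N-ℓ) * (Nat.factorial (N-m) : ℝ) / (Nat.factorial (ℓ-m) : ℝ) := by
    have hb : (m:ℝ) - (N:ℝ) = -(((N-m:ℕ)):ℝ) := by
      rw [Nat.cast_sub hmN]; ring
    rw [hb, poch_neg_nat (by omega : N-ℓ ≤ N-m), show (N-m)-(N-ℓ) = ℓ-m by omega]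
  have r2 : poch (c - (N:ℝ) - (m:ℝ) + 1) (N-ℓ)
      = (-1:ℝ)^(N-ℓ) * (poch (-c) (N+m) / poch (-c) (m+ℓ)) := by
    rw [poch_reflect (c - (N:ℝ) - (m:ℝ) + 1) (N-ℓ)]
    have hb : 1 - (c - (N:ℝ) - (m:ℝ) + 1) - ((N-ℓ : ℕ):ℝ) = -c + ((m+ℓ : ℕ):ℝ) := by
      rw [Nat.cast_sub hℓN]; push_cast; ring
    rw [hb, poch_ratio (-c) hΦ (m+ℓ) (N-ℓ) (N+m) (by omega)]
  have r3 : poch (-(N:ℝ)) (N-ℓ)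
      = (-1:ℝ)^(N-ℓ) * (Nat.factorial N : ℝ) / (Nat.factorial ℓ : ℝ) := by
    rw [poch_neg_nat (by omega : N-ℓ ≤ N), show N-(N-ℓ) = ℓ by omega]
  have r4 : poch (d - 2*(N:ℝ) + 1) (N-ℓ)
      = (-1:ℝ)^(N-ℓ) * (poch (-d) (2*N) / poch (-d) (N+ℓ)) := by
    rw [poch_reflect (d - 2*(N:ℝ) + 1) (N-ℓ)]
    have hb : 1 - (d - 2*(N:ℝ) + 1) - ((N-ℓ : ℕ):ℝ) = -d + ((N+ℓ : ℕ):ℝ) := by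
      rw [Nat.cast_sub hℓN]; push_cast; ring
    rw [hb, poch_ratio (-d) hΨ (N+ℓ) (N-ℓ) (2*N) (by omega)]
  have r5 : poch (-(n:ℝ)) ℓ
      = (-1:ℝ)^ℓ * (Nat.factorial n : ℝ) / (Nat.factorial (n-ℓ) : ℝ) :=
    poch_neg_nat hℓn
  have r6 : poch ((n:ℝ) - c - 1) ℓ = poch (-c) ((n-1)+ℓ) / poch (-c) (n-1) := by
    have hb : (n:ℝ) - c - 1 = -c + ((n-1:ℕ):ℝ) := by
      rw [Nat.cast_sub hn1]; push_cast; ring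
    rw [hb, poch_ratio (-c) hΦ (n-1) ℓ ((n-1)+ℓ) rfl]
  have r7 : poch (-(N:ℝ)) ℓ
      = (-1:ℝ)^ℓ * (Nat.factorial N : ℝ) / (Nat.factorial (N-ℓ) : ℝ) :=
    poch_neg_nat hℓN
  have r8 : poch ((N:ℝ) - d) ℓ = poch (-d) (N+ℓ) / poch (-d) N := by
    have hb : (N:ℝ) - d = -d + ((N:ℕ):ℝ) := by ring
    rw [hb, poch_ratio (-d) hΨ N ℓ (N+ℓ) rfl]
  have r9 : poch ((m:ℝ) + (ℓ:ℝ) - c) (n-m-1)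
      = poch (-c) ((n-1)+ℓ) / poch (-c) (m+ℓ) := by
    have hb : (m:ℝ) + (ℓ:ℝ) - c = -c + ((m+ℓ:ℕ):ℝ) := by push_cast; ring
    rw [hb, poch_ratio (-c) hΦ (m+ℓ) (n-m-1) ((n-1)+ℓ) (by omega)]
  have r10 : (((n-m).choose (ℓ-m)) : ℝ)
      = (Nat.factorial (n-m) : ℝ) / ((Nat.factorial (ℓ-m) : ℝ) * (Nat.factorial (n-ℓ) : ℝ)) := by
    have h := Nat.choose_mul_factorial_mul_factorial (show ℓ-m ≤ n-m by omega)
    rw [show (n-m)-(ℓ-m) = n-ℓ by omega] at h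
    have hf1 : ((Nat.factorial (ℓ-m) : ℝ)) ≠ 0 := by exact_mod_cast Nat.factorial_ne_zero _
    have hf2 : ((Nat.factorial (n-ℓ) : ℝ)) ≠ 0 := by exact_mod_cast Nat.factorial_ne_zero _
    field_simp
    exact_mod_cast h
  have hfNℓ : ((Nat.factorial (N-ℓ) : ℝ)) ≠ 0 := by exact_mod_cast Nat.factorial_ne_zero _
  have hfℓ : ((Nat.factorial ℓ : ℝ)) ≠ 0 := by exact_mod_cast Nat.factorial_ne_zero _
  have hfN : ((Nat.factorial N : ℝ)) ≠ 0 := by exact_mod_cast Nat.factorial_ne_zero _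
  have hfn : ((Nat.factorial n : ℝ)) ≠ 0 := by exact_mod_cast Nat.factorial_ne_zero _
  have hfnℓ : ((Nat.factorial (n-ℓ) : ℝ)) ≠ 0 := by exact_mod_cast Nat.factorial_ne_zero _
  have hfℓm : ((Nat.factorial (ℓ-m) : ℝ)) ≠ 0 := by exact_mod_cast Nat.factorial_ne_zero _
  have hfNm : ((Nat.factorial (N-m) : ℝ)) ≠ 0 := by exact_mod_cast Nat.factorial_ne_zero _
  have hfnm : ((Nat.factorial (n-m) : ℝ)) ≠ 0 := by exact_mod_cast Nat.factorial_ne_zero _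
  have hs : ((-1:ℝ)^(N-ℓ)) ≠ 0 := by positivity
  have ht : ((-1:ℝ)^ℓ) ≠ 0 := by positivity
  rw [r1, r2, r3, r4, r5, r6, r7, r8, r9, r10]
  have hfN2 : ((Nat.factorial N : ℝ))^2 ≠ 0 := pow_ne_zero 2 hfN
  field_simp
  rw [div_eq_div_iff
    (by apply_rules [mul_ne_zero, hfN2, hΦ, hΨ, hs, ht, hfNℓ, hfℓ, hfN, hfn, hfnℓ, hfℓm, hfNm, hfnm])
    (by apply_rules [mul_ne_zero, hfN2, hΦ, hΨ, hs, ht, hfNℓ, hfℓ, hfN, hfn, hfnℓ, hfℓm, hfNm, hfnm])]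
  ring

set_option maxHeartbeats 1000000 in
lemma offdiag_sum (N m n : ℕ) (c d : ℝ) (hc : ∀ z : ℤ, c ≠ (z:ℝ)) (hd : ∀ z : ℤ, d ≠ (z:ℝ))
    (hmn : m < n) (hnN : n ≤ N) :
    ∑ ℓ ∈ Finset.range (N+1),
      ((poch ((m:ℝ) - (N:ℝ)) (N-ℓ) * poch (c - (N:ℝ) - (m:ℝ) + 1) (N-ℓ)
          / ((Nat.factorial (N-ℓ) : ℝ) * poch (-(N:ℝ)) (N-ℓ) * poch (d - 2*(N:ℝ) + 1) (N-ℓ)))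
      * ((-1:ℝ)^ℓ * poch (-(n:ℝ)) ℓ * poch ((n:ℝ) - c - 1) ℓ
          / ((Nat.factorial ℓ : ℝ) * poch (-(N:ℝ)) ℓ * poch ((N:ℝ) - d) ℓ))) = 0 := by
  have hmN : m ≤ N := by omega
  set F : ℕ → ℝ := fun ℓ =>
      ((poch ((m:ℝ) - (N:ℝ)) (N-ℓ) * poch (c - (N:ℝ) - (m:ℝ) + 1) (N-ℓ)
          / ((Nat.factorial (N-ℓ) : ℝ) * poch (-(N:ℝ)) (N-ℓ) * poch (d - 2*(N:ℝ) + 1) (N-ℓ)))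
      * ((-1:ℝ)^ℓ * poch (-(n:ℝ)) ℓ * poch ((n:ℝ) - c - 1) ℓ
          / ((Nat.factorial ℓ : ℝ) * poch (-(N:ℝ)) ℓ * poch ((N:ℝ) - d) ℓ))) with hF
  have zero_lt : ∀ ℓ, ℓ < m → F ℓ = 0 := by
    intro ℓ hℓ
    have hb : (m:ℝ) - (N:ℝ) = -(((N-m:ℕ)):ℝ) := by rw [Nat.cast_sub hmN]; ring
    have h0 : poch ((m:ℝ) - (N:ℝ)) (N-ℓ) = 0 := by
      rw [hb]; exact poch_neg_nat_eq_zero (by omega)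
    simp only [hF, h0, zero_mul, zero_div]
  have zero_gt : ∀ ℓ, n < ℓ → F ℓ = 0 := by
    intro ℓ hℓ
    have h0 : poch (-(n:ℝ)) ℓ = 0 := poch_neg_nat_eq_zero hℓ
    simp only [hF, h0, mul_zero, zero_mul, zero_div, mul_zero]
  have hsub : Finset.Icc m n ⊆ Finset.range (N+1) := by
    intro x hx
    rw [Finset.mem_Icc] at hx
    rw [Finset.mem_range]
    omega
  have step1 : ∑ ℓ ∈ Finset.range (N+1), F ℓ = ∑ ℓ ∈ Finset.Icc m n, F ℓ := by
    refine (Finset.sum_subset hsub ?_).symm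
    intro x _ hx
    rw [Finset.mem_Icc] at hx
    rcases Nat.lt_or_ge x m with h | h
    · exact zero_lt x h
    · exact zero_gt x (by omega)
  have step2 : ∑ ℓ ∈ Finset.Icc m n, F ℓ = ∑ u ∈ Finset.range ((n-m)+1), F (m+u) := by
    rw [← Finset.Ico_add_one_right_eq_Icc, Finset.sum_Ico_eq_sum_range, show n+1-m = (n-m)+1 by omega]
  have step3 : ∀ u ∈ Finset.range ((n-m)+1), F (m+u)
      = ((((Nat.factorial (N-m):ℝ) * (Nat.factorial n) * poch (-d) N * poch (-c) (N+m))
          / (((Nat.factorial N:ℝ))^2 * poch (-d) (2*N) * poch (-c) (n-1) * (Nat.factorial (n-m))))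
          * (-1:ℝ)^m)
        * ((-1:ℝ)^u * ((n-m).choose u : ℝ) * poch ((2*(m:ℝ) - c) + (u:ℕ)) (n-m-1)) := by
    intro u hu
    have hu' : u ≤ n - m := by
      rw [Finset.mem_range] at hu; omega
    have hk := key_term N m n (m+u) c d hc hd (by omega) (by omega) hnN hmn
    rw [show (m+u)-m = u by omega] at hk
    rw [show (m:ℝ) + ((m+u : ℕ):ℝ) - c = (2*(m:ℝ) - c) + (u:ℕ) by push_cast; ring] at hk
    have hk' : F (m+u) = _ := hk
    rw [hk', pow_add]
    ring
  rw [step1, step2, Finset.sum_congr rfl step3, ← Finset.mul_sum,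
    alt_sum_poch ((n-m)) ((n-m)-1) (by omega) (2*(m:ℝ) - c), mul_zero]

lemma poch_neg_nat_ne_zero {a k : ℕ} (h : k ≤ a) : poch (-(a:ℝ)) k ≠ 0 := by
  rw [poch_neg_nat h]
  have h1 : ((Nat.factorial a : ℝ)) ≠ 0 := by exact_mod_cast Nat.factorial_ne_zero _
  have h2 : ((Nat.factorial (a-k) : ℝ)) ≠ 0 := by exact_mod_cast Nat.factorial_ne_zero _
  have h3 : ((-1:ℝ))^k ≠ 0 := by positivity
  exact div_ne_zero (mul_ne_zero h3 h1) h2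

lemma diag_e (N n : ℕ) (hn : n ≤ N) (c d : ℝ) (hc : ∀ z : ℤ, c ≠ (z:ℝ)) (hd : ∀ z : ℤ, d ≠ (z:ℝ)) :
    (poch (-(N:ℝ)) n * poch ((N:ℝ) - d) n / poch ((n:ℝ) - c - 1) n)
    * ((-1:ℝ)^n * poch (-(n:ℝ)) n * poch ((n:ℝ) - c - 1) n
        / ((Nat.factorial n : ℝ) * poch (-(N:ℝ)) n * poch ((N:ℝ) - d) n)) = 1 := by
  have ha1 : poch (-(N:ℝ)) n ≠ 0 := poch_neg_nat_ne_zero hn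
  have ha2 : poch ((N:ℝ) - d) n ≠ 0 :=
    poch_nonint_ne_zero hd _ (Or.inr ⟨(N:ℤ), by push_cast; ring⟩) n
  have ha3 : poch ((n:ℝ) - c - 1) n ≠ 0 :=
    poch_nonint_ne_zero hc _ (Or.inr ⟨(n:ℤ) - 1, by push_cast; ring⟩) n
  have hfn : ((Nat.factorial n : ℝ)) ≠ 0 := by exact_mod_cast Nat.factorial_ne_zero _
  have hp : (-1:ℝ)^n * poch (-(n:ℝ)) n = (Nat.factorial n : ℝ) := by
    rw [poch_neg_nat (le_refl n), Nat.sub_self, Nat.factorial_zero]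
    push_cast
    rw [div_one, ← mul_assoc, ← mul_pow]
    norm_num
  rw [hp]
  field_simp

lemma diag_estar (N n : ℕ) (hn : n ≤ N) (c d : ℝ) (hc : ∀ z : ℤ, c ≠ (z:ℝ)) (hd : ∀ z : ℤ, d ≠ (z:ℝ)) :
    (poch (-(N:ℝ)) (N-n) * poch ((n:ℝ) + (N:ℝ) - d) (N-n) / poch (c - (N:ℝ) - (n:ℝ) + 1) (N-n))
    * (poch ((n:ℝ) - (N:ℝ)) (N-n) * poch (c - (N:ℝ) - (n:ℝ) + 1) (N-n)
        / ((Nat.factorial (N-n) : ℝ) * poch (-(N:ℝ)) (N-n) * poch (d - 2*(N:ℝ) + 1) (N-n))) = 1 := by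
  have hb1 : poch (-(N:ℝ)) (N-n) ≠ 0 := poch_neg_nat_ne_zero (by omega)
  have hb2 : poch ((n:ℝ) + (N:ℝ) - d) (N-n) ≠ 0 :=
    poch_nonint_ne_zero hd _ (Or.inr ⟨(n:ℤ) + (N:ℤ), by push_cast; ring⟩) (N-n)
  have hb3 : poch (c - (N:ℝ) - (n:ℝ) + 1) (N-n) ≠ 0 :=
    poch_nonint_ne_zero hc _ (Or.inl ⟨1 - (N:ℤ) - (n:ℤ), by push_cast; ring⟩) (N-n)
  have hfn : ((Nat.factorial (N-n) : ℝ)) ≠ 0 := by exact_mod_cast Nat.factorial_ne_zero _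
  have hs : ((-1:ℝ))^(N-n) ≠ 0 := by positivity
  have hq : poch ((n:ℝ) - (N:ℝ)) (N-n) = (-1:ℝ)^(N-n) * (Nat.factorial (N-n) : ℝ) := by
    have hb : (n:ℝ) - (N:ℝ) = -(((N-n:ℕ)):ℝ) := by rw [Nat.cast_sub hn]; ring
    rw [hb, poch_neg_nat (le_refl (N-n)), Nat.sub_self, Nat.factorial_zero]
    push_cast
    rw [div_one]
  have hr : poch (d - 2*(N:ℝ) + 1) (N-n)
      = (-1:ℝ)^(N-n) * poch ((n:ℝ) + (N:ℝ) - d) (N-n) := by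
    rw [poch_reflect (d - 2*(N:ℝ) + 1) (N-n)]
    congr 2
    rw [Nat.cast_sub hn]
    ring
  rw [hq, hr]
  field_simp


set_option maxHeartbeats 1000000 in
/-- If neither `2β + 2ζ` nor `2α + β + 2ζ` is an integer, the normalized
EVP bases `e_n` and `e*_m` satisfy the orthogonality relation
`Σ_ℓ e*_m(ℓ) e_n(ℓ) = δ_{m,n}`. -/
theorem evp_orthogonality_e (N : ℕ) (hN : 1 ≤ N) (α β ζ : ℝ)
    (h1 : ∀ z : ℤ, 2 * β + 2 * ζ ≠ (z : ℝ))
    (h2 : ∀ z : ℤ, 2 * α + β + 2 * ζ ≠ (z : ℝ))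
    (e : Fin (N + 1) → Fin (N + 1) → ℝ)
    (estar : Fin (N + 1) → Fin (N + 1) → ℝ)
    (he : ∀ n ℓ : Fin (N + 1), e n ℓ =
      (poch (-(N : ℝ)) n * poch ((N : ℝ) - 2 * α - β - 2 * ζ) n
          / poch ((n : ℝ) - 2 * β - 2 * ζ - 1) n)
        * ((-1 : ℝ) ^ (ℓ : ℕ) * poch (-(n : ℝ)) ℓ
            * poch ((n : ℝ) - 2 * β - 2 * ζ - 1) ℓ
          / ((Nat.factorial ℓ : ℝ) * poch (-(N : ℝ)) ℓ
              * poch ((N : ℝ) - 2 * α - β - 2 * ζ) ℓ)))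
    (hes : ∀ m ℓ : Fin (N + 1), estar m ℓ =
      (poch (-(N : ℝ)) (N - m) * poch ((m : ℝ) + (N : ℝ) - 2 * α - β - 2 * ζ) (N - m)
          / poch (2 * β + 2 * ζ - (N : ℝ) - (m : ℝ) + 1) (N - m))
        * (poch ((m : ℝ) - (N : ℝ)) (N - ℓ)
            * poch (2 * β + 2 * ζ - (N : ℝ) - (m : ℝ) + 1) (N - ℓ)
          / ((Nat.factorial (N - ℓ) : ℝ) * poch (-(N : ℝ)) (N - ℓ)
              * poch (2 * α + β + 2 * ζ - 2 * (N : ℝ) + 1) (N - ℓ)))) :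
    ∀ m n : Fin (N + 1),
      (∑ ℓ : Fin (N + 1), estar m ℓ * e n ℓ) = if m = n then 1 else 0 := by
  intro m n
  have hmN : (m:ℕ) ≤ N := Fin.is_le m
  have hnN : (n:ℕ) ≤ N := Fin.is_le n
  have bX1 : (N:ℝ) - 2*α - β - 2*ζ = (N:ℝ) - (2*α+β+2*ζ) := by ring
  have bX2 : (n:ℝ) - 2*β - 2*ζ - 1 = (n:ℝ) - (2*β+2*ζ) - 1 := by ring
  have bX3 : (m:ℝ) + (N:ℝ) - 2*α - β - 2*ζ = (m:ℝ) + (N:ℝ) - (2*α+β+2*ζ) := by ring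
  rcases lt_trichotomy (m:ℕ) (n:ℕ) with hlt | heq | hgt
  · -- off-diagonal m < n
    have hne : m ≠ n := fun h => by rw [h] at hlt; omega
    rw [if_neg hne]
    set F : ℕ → ℝ := fun ℓ =>
      ((poch ((m:ℝ) - (N:ℝ)) (N-ℓ) * poch (2*β+2*ζ - (N:ℝ) - (m:ℝ) + 1) (N-ℓ)
          / ((Nat.factorial (N-ℓ) : ℝ) * poch (-(N:ℝ)) (N-ℓ)
              * poch (2*α+β+2*ζ - 2*(N:ℝ) + 1) (N-ℓ)))
      * ((-1:ℝ)^ℓ * poch (-((n:ℕ):ℝ)) ℓ * poch ((n:ℝ) - (2*β+2*ζ) - 1) ℓ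
          / ((Nat.factorial ℓ : ℝ) * poch (-(N:ℝ)) ℓ
              * poch ((N:ℝ) - (2*α+β+2*ζ)) ℓ))) with hF
    set B : ℝ :=
      (poch (-(N:ℝ)) (N - (m:ℕ)) * poch ((m:ℝ) + (N:ℝ) - (2*α+β+2*ζ)) (N - (m:ℕ))
          / poch (2*β+2*ζ - (N:ℝ) - (m:ℝ) + 1) (N - (m:ℕ)))
      * (poch (-(N:ℝ)) (n:ℕ) * poch ((N:ℝ) - (2*α+β+2*ζ)) (n:ℕ)
          / poch ((n:ℝ) - (2*β+2*ζ) - 1) (n:ℕ)) with hB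
    have key : ∀ ℓ : Fin (N+1), estar m ℓ * e n ℓ = B * F (ℓ:ℕ) := by
      intro ℓ
      rw [hes m ℓ, he n ℓ, bX1, bX2, bX3]
      simp only [hB, hF]
      ring
    rw [Finset.sum_congr rfl (fun ℓ _ => key ℓ), ← Finset.mul_sum,
      Fin.sum_univ_eq_sum_range F (N+1), hF]
    rw [offdiag_sum N (m:ℕ) (n:ℕ) (2*β+2*ζ) (2*α+β+2*ζ) h1 h2 hlt hnN, mul_zero]
  · -- diagonal
    have heqf : m = n := Fin.ext heq
    subst heqf
    rw [if_pos rfl]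
    have hzero : ∀ ℓ ∈ (Finset.univ : Finset (Fin (N+1))), ℓ ≠ m → estar m ℓ * e m ℓ = 0 := by
      intro ℓ _ hℓ
      rcases Nat.lt_or_ge (m:ℕ) (ℓ:ℕ) with h | h
      · rw [he m ℓ, poch_neg_nat_eq_zero h]
        simp
      · have h' : (ℓ:ℕ) < (m:ℕ) := by
          rcases Nat.lt_or_ge (ℓ:ℕ) (m:ℕ) with h2' | h2'
          · exact h2'
          · exact absurd (Fin.ext (le_antisymm h2' h)).symm hℓ
        have hb : (m:ℝ) - (N:ℝ) = -(((N-(m:ℕ) : ℕ)):ℝ) := by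
          rw [Nat.cast_sub hmN]; ring
        rw [hes m ℓ, hb, poch_neg_nat_eq_zero (show N-(m:ℕ) < N-(ℓ:ℕ) by omega)]
        simp
    rw [Finset.sum_eq_single_of_mem m (Finset.mem_univ m) hzero]
    rw [hes m m, he m m, bX1, bX2, bX3]
    rw [diag_estar N (m:ℕ) hmN (2*β+2*ζ) (2*α+β+2*ζ) h1 h2,
      diag_e N (m:ℕ) hmN (2*β+2*ζ) (2*α+β+2*ζ) h1 h2]
    norm_num
  · -- m > n
    have hne : m ≠ n := fun h => by rw [h] at hgt; omega
    rw [if_neg hne]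
    refine Finset.sum_eq_zero (fun ℓ _ => ?_)
    rcases Nat.lt_or_ge (n:ℕ) (ℓ:ℕ) with h | h
    · rw [he n ℓ, poch_neg_nat_eq_zero h]
      simp
    · have hb : (m:ℝ) - (N:ℝ) = -(((N-(m:ℕ) : ℕ)):ℝ) := by
        rw [Nat.cast_sub hmN]; ring
      rw [hes m ℓ, hb, poch_neg_nat_eq_zero (show N-(m:ℕ) < N-(ℓ:ℕ) by omega)]
      simp
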